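/- arXiv:1610.09461 — 7 statements merged into one kernel-verified Lean document; each statement's English description precedes it below -/
import Mathlib

section
/- Let d ≥ 1, λ ≥ 0 and z ∈ ℝ^d, and let φ(x) = (1/2)‖x − z‖₂² + λ(‖x‖₁ − ‖x‖₂). Then the zero vector 0 is a global minimizer of φ if and only if z = 0. -/
/-- `0` is a global minimizer of
`φ(x) = (1/2)‖x − z‖₂² + λ(‖x‖₁ − ‖x‖₂)` if and only if `z = 0`. -/
theorem l12_prox_zero_minimizer_iff
    (d : ℕ) (hd : 1 ≤ d) (lam : ℝ) (hlam : 0 ≤ lam) (z : Fin d → ℝ)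
    (phi : (Fin d → ℝ) → ℝ)
    (hphi : ∀ x : Fin d → ℝ, phi x =
      (1 / 2) * (∑ i, (x i - z i) ^ 2)
        + lam * ((∑ i, |x i|) - Real.sqrt (∑ i, (x i) ^ 2))) :
    (∀ y : Fin d → ℝ, phi 0 ≤ phi y) ↔ z = 0 := by
  have hphi0 : phi 0 = (1 / 2) * (∑ i, (z i) ^ 2) := by
    rw [hphi 0]; simp
  constructor
  · intro h
    funext i
    by_contra hi
    set y : Fin d → ℝ := fun j => if j = i then z i else 0 with hy
    have hkey : ∀ f : Fin d → ℝ, ∑ j, f j = (∑ j ∈ Finset.univ.erase i, f j) + f i :=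
      fun f => (Finset.sum_erase_add _ _ (Finset.mem_univ i)).symm
    have hA : ∑ j, (y j - z j) ^ 2 = ∑ j ∈ Finset.univ.erase i, (z j) ^ 2 := by
      rw [hkey]
      have h1 : ∀ j ∈ Finset.univ.erase i, (y j - z j) ^ 2 = (z j) ^ 2 := by
        intro j hj
        have : j ≠ i := (Finset.mem_erase.mp hj).1
        simp [hy, this]
      rw [Finset.sum_congr rfl h1]
      simp [hy]
    have hB : ∑ j, |y j| = |z i| := by
      rw [hkey]
      have h1 : ∀ j ∈ Finset.univ.erase i, |y j| = 0 := by
        intro j hj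
        have : j ≠ i := (Finset.mem_erase.mp hj).1
        simp [hy, this]
      rw [Finset.sum_congr rfl h1]
      simp [hy]
    have hC : ∑ j, (y j) ^ 2 = (z i) ^ 2 := by
      rw [hkey]
      have h1 : ∀ j ∈ Finset.univ.erase i, (y j) ^ 2 = 0 := by
        intro j hj
        have : j ≠ i := (Finset.mem_erase.mp hj).1
        simp [hy, this]
      rw [Finset.sum_congr rfl h1]
      simp [hy]
    have hphiy : phi y = (1 / 2) * ∑ j ∈ Finset.univ.erase i, (z j) ^ 2 := by
      rw [hphi y, hA, hB, hC, Real.sqrt_sq_eq_abs]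
      ring
    have hz : ∑ j, (z j) ^ 2 = (∑ j ∈ Finset.univ.erase i, (z j) ^ 2) + (z i) ^ 2 :=
      hkey _
    have hle := h y
    rw [hphi0, hphiy, hz] at hle
    have : (z i) ^ 2 ≤ 0 := by linarith
    exact hi (pow_eq_zero_iff (by norm_num) |>.mp (le_antisymm this (sq_nonneg _)))
  · intro hz y
    subst hz
    rw [hphi0, hphi y]
    simp only [Pi.zero_apply, sub_zero]
    have hsq : ∑ j, (y j) ^ 2 ≤ (∑ j, |y j|) ^ 2 := by
      rw [sq (∑ j, |y j|), Finset.sum_mul]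
      apply Finset.sum_le_sum
      intro j _
      rw [← sq_abs, sq]
      exact mul_le_mul_of_nonneg_left
        (Finset.single_le_sum (fun k _ => abs_nonneg (y k)) (Finset.mem_univ j))
        (abs_nonneg _)
    have hsqrt : Real.sqrt (∑ j, (y j) ^ 2) ≤ ∑ j, |y j| := by
      calc Real.sqrt (∑ j, (y j) ^ 2) ≤ Real.sqrt ((∑ j, |y j|) ^ 2) :=
            Real.sqrt_le_sqrt hsq
        _ = ∑ j, |y j| := Real.sqrt_sq (Finset.sum_nonneg fun k _ => abs_nonneg _)
    have h1 : 0 ≤ (1 / 2 : ℝ) * ∑ j, (y j) ^ 2 := by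
      positivity
    have h2 : 0 ≤ lam * ((∑ j, |y j|) - Real.sqrt (∑ j, (y j) ^ 2)) :=
      mul_nonneg hlam (by linarith)
    have h0 : (1 / 2 : ℝ) * ∑ i : Fin d, ((0:ℝ)) ^ 2 = 0 := by simp
    linarith
end

section
/- Let d ≥ 1, λ ≥ 0 and z ∈ ℝ^d, and let x* be a global minimizer of φ(x) = (1/2)‖x − z‖₂² + λ(‖x‖₁ − ‖x‖₂). Then for every coordinate i with x*_i ≠ 0, sign(x*_i) = sign(z_i); in particular z_i ≠ 0 and x*_i · z_i > 0. -/
lemma sum_update_eq' {d : ℕ} (x : Fin d → ℝ) (i : Fin d) (c : ℝ)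
    (F : Fin d → ℝ → ℝ) :
    ∑ j, F j (Function.update x i c j) = ∑ j, F j (x j) - F i (x i) + F i c := by
  classical
  have he : ∑ j ∈ Finset.univ.erase i, F j (Function.update x i c j)
      = ∑ j ∈ Finset.univ.erase i, F j (x j) :=
    Finset.sum_congr rfl fun j hj => by
      rw [Function.update_of_ne (Finset.ne_of_mem_erase hj)]
  rw [← Finset.add_sum_erase _ (fun j => F j (Function.update x i c j)) (Finset.mem_univ i),
      ← Finset.add_sum_erase _ (fun j => F j (x j)) (Finset.mem_univ i), he,
      Function.update_self]
  ring

/-- If `x*` is a global minimizer of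
`φ(x) = (1/2)‖x − z‖₂² + λ(‖x‖₁ − ‖x‖₂)` and `x*_i ≠ 0`, then
`sign(x*_i) = sign(z_i)`, `z_i ≠ 0` and `x*_i · z_i > 0`. -/
theorem l12_prox_minimizer_sign
    (d : ℕ) (hd : 1 ≤ d) (lam : ℝ) (hlam : 0 ≤ lam) (z : Fin d → ℝ)
    (phi : (Fin d → ℝ) → ℝ)
    (hphi : ∀ x : Fin d → ℝ, phi x =
      (1 / 2) * (∑ i, (x i - z i) ^ 2)
        + lam * ((∑ i, |x i|) - Real.sqrt (∑ i, (x i) ^ 2)))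
    (xstar : Fin d → ℝ) (hxstar : ∀ y : Fin d → ℝ, phi xstar ≤ phi y)
    (i : Fin d) (hi : xstar i ≠ 0) :
    Real.sign (xstar i) = Real.sign (z i) ∧ z i ≠ 0 ∧ xstar i * z i > 0 := by
  classical
  -- Claim 1 : xstar i * z i ≥ 0, by flipping the sign of coordinate i
  have claim1 : 0 ≤ xstar i * z i := by
    have hmin := hxstar (Function.update xstar i (-(xstar i)))
    rw [hphi, hphi] at hmin
    rw [sum_update_eq' xstar i (-(xstar i)) (fun j u => (u - z j) ^ 2),
        sum_update_eq' xstar i (-(xstar i)) (fun j u => |u|),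
        sum_update_eq' xstar i (-(xstar i)) (fun j u => u ^ 2)] at hmin
    simp only [abs_neg] at hmin
    have hsq : ∑ j, xstar j ^ 2 - xstar i ^ 2 + (-(xstar i)) ^ 2
        = ∑ j, xstar j ^ 2 := by ring
    rw [hsq] at hmin
    nlinarith [hmin]
  -- Claim 2 : z i ≠ 0, by setting coordinate i to zero
  have claim2 : z i ≠ 0 := by
    intro hzi
    have hmin := hxstar (Function.update xstar i 0)
    rw [hphi, hphi] at hmin
    rw [sum_update_eq' xstar i 0 (fun j u => (u - z j) ^ 2),
        sum_update_eq' xstar i 0 (fun j u => |u|),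
        sum_update_eq' xstar i 0 (fun j u => u ^ 2)] at hmin
    rw [hzi] at hmin
    simp only [abs_zero, sub_zero, zero_sub, neg_zero] at hmin
    have hCnn : 0 ≤ ∑ j, xstar j ^ 2 - xstar i ^ 2 + (0:ℝ) ^ 2 := by
      have h := sum_update_eq' xstar i 0 (fun j u => u ^ 2)
      rw [← h]
      exact Finset.sum_nonneg fun j _ => sq_nonneg _
    -- sqrt inequality : √C ≤ √(C - s²) + |s|
    have hsqrt : Real.sqrt (∑ j, xstar j ^ 2)
        ≤ Real.sqrt (∑ j, xstar j ^ 2 - xstar i ^ 2 + (0:ℝ) ^ 2) + |xstar i| := by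
      have h1 : ∑ j, xstar j ^ 2
          ≤ (Real.sqrt (∑ j, xstar j ^ 2 - xstar i ^ 2 + (0:ℝ) ^ 2) + |xstar i|) ^ 2 := by
        have h2 := Real.sq_sqrt hCnn
        nlinarith [Real.sqrt_nonneg (∑ j, xstar j ^ 2 - xstar i ^ 2 + (0:ℝ) ^ 2),
          abs_nonneg (xstar i), sq_abs (xstar i)]
      calc Real.sqrt (∑ j, xstar j ^ 2)
          ≤ Real.sqrt ((Real.sqrt (∑ j, xstar j ^ 2 - xstar i ^ 2 + (0:ℝ) ^ 2)
              + |xstar i|) ^ 2) := Real.sqrt_le_sqrt h1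
        _ = _ := Real.sqrt_sq (by positivity)
    have hmul : lam * (Real.sqrt (∑ j, xstar j ^ 2)
          - Real.sqrt (∑ j, xstar j ^ 2 - xstar i ^ 2 + (0:ℝ) ^ 2))
        ≤ lam * |xstar i| :=
      mul_le_mul_of_nonneg_left (by linarith) hlam
    have hs2 : 0 < xstar i ^ 2 := by positivity
    set S2 := ∑ j, xstar j ^ 2 with hS2
    set SA := ∑ j, (xstar j - z j) ^ 2 with hSA
    set SB := ∑ j, |xstar j| with hSB
    set rC := Real.sqrt S2 with hrC
    set rC' := Real.sqrt (S2 - xstar i ^ 2 + (0:ℝ) ^ 2) with hrC'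
    nlinarith [hmin, hmul, hs2]
  have hst : 0 < xstar i * z i :=
    lt_of_le_of_ne claim1 (Ne.symm (mul_ne_zero hi claim2))
  refine ⟨?_, claim2, hst⟩
  rcases lt_or_gt_of_ne hi with hneg | hpos
  · have htneg : z i < 0 := by nlinarith
    rw [Real.sign_of_neg hneg, Real.sign_of_neg htneg]
  · have htpos : 0 < z i := by nlinarith
    rw [Real.sign_of_pos hpos, Real.sign_of_pos htpos]
end

section
/- Let d ≥ 1, λ > 0 and z ∈ ℝ^d with z ≠ 0, and let x* be a global minimizer of φ(x) = (1/2)‖x − z‖₂² + λ(‖x‖₁ − ‖x‖₂). Then x* ≠ 0, and for every coordinate i the following first-order optimality conditions hold: (a) if x*_i ≠ 0 then x*_i − z_i + λ·sign(x*_i) − λ·x*_i/‖x*‖₂ = 0; (b) if x*_i = 0 then |z_i| ≤ λ. -/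
/-!
Changing a single coordinate `x i` of a minimizer `x` of `φ` changes `φ` by the change of the
one-variable function `v ↦ ½(v - z i)² + λ|v| - λ√(S + v²)`, where `S = ‖x‖₂² - (x i)²` collects
the other coordinates; so `x i` minimizes this function. At `x i ≠ 0` it is differentiable and
its derivative vanishes, which is (a). At `x i = 0` the term `-λ√(S + v²)` is at most `-λ√S`,
so `v (z i) ≤ ½v² + λ|v|` for all `v`, which forces `|z i| ≤ λ`, i.e. (b). If `x = 0`, then
`S = 0` and the function is `½(v - z i)²`, whose minimality at `0` forces `z = 0`.
-/

open Finset Function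

theorem Real.sign_eq_signType_sign (r : ℝ) : Real.sign r = (SignType.sign r : ℝ) := by
  rcases lt_trichotomy r 0 with h | rfl | h
  · simp [Real.sign_of_neg h, h]
  · simp [Real.sign_zero]
  · simp [Real.sign_of_pos h, h]

theorem Finset.sum_apply_update_eq {ι α M : Type*} [Fintype ι] [DecidableEq ι] [AddCommGroup M]
    (f : ι → α → M) (x : ι → α) (i : ι) (v : α) :
    ∑ j, f j (update x i v j) = ∑ j, f j (x j) + (f i v - f i (x i)) := by
  rw [← add_sum_erase _ _ (mem_univ i), ← add_sum_erase _ (fun j ↦ f j (x j)) (mem_univ i),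
    update_self, sum_congr rfl fun j hj ↦ by rw [update_of_ne (ne_of_mem_erase hj)]]
  abel

noncomputable def l12Obj {ι : Type*} [Fintype ι] (lam : ℝ) (z x : ι → ℝ) : ℝ :=
  (1 / 2) * (∑ i, (x i - z i) ^ 2) + lam * ((∑ i, |x i|) - √(∑ i, (x i) ^ 2))

/-- `φ` as a function of one coordinate `v`, the others contributing `S` to `‖x‖₂²`
(up to an additive constant). -/
noncomputable def l12Section (lam c S v : ℝ) : ℝ :=
  (1 / 2) * (v - c) ^ 2 + lam * |v| - lam * √(S + v ^ 2)

theorem l12Obj_update {ι : Type*} [Fintype ι] [DecidableEq ι] (lam : ℝ) (z x : ι → ℝ) (i : ι)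
    (v : ℝ) :
    l12Obj lam z (update x i v) = l12Obj lam z x
      + (l12Section lam (z i) (∑ j, x j ^ 2 - x i ^ 2) v
        - l12Section lam (z i) (∑ j, x j ^ 2 - x i ^ 2) (x i)) := by
  simp only [l12Obj, l12Section, sum_apply_update_eq (fun j a ↦ (a - z j) ^ 2),
    sum_apply_update_eq (fun _ a ↦ |a|), sum_apply_update_eq (fun _ a ↦ a ^ 2), sub_add_cancel]
  ring_nf

theorem l12Section_le_of_forall_l12Obj_le {ι : Type*} [Fintype ι] {lam : ℝ} {z x : ι → ℝ}
    (hx : ∀ y, l12Obj lam z x ≤ l12Obj lam z y) (i : ι) (v : ℝ) :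
    l12Section lam (z i) (∑ j, x j ^ 2 - x i ^ 2) (x i)
      ≤ l12Section lam (z i) (∑ j, x j ^ 2 - x i ^ 2) v := by
  classical
  have := hx (update x i v)
  rw [l12Obj_update] at this
  linarith

theorem hasDerivAt_l12Section {lam c S a : ℝ} (ha : a ≠ 0) (hS : S + a ^ 2 ≠ 0) :
    HasDerivAt (l12Section lam c S)
      (a - c + lam * Real.sign a - lam * a / √(S + a ^ 2)) a := by
  have hquad : HasDerivAt (fun v : ℝ ↦ (1 / 2) * (v - c) ^ 2) (a - c) a := by
    simpa using (((hasDerivAt_id a).sub_const c).pow 2).const_mul (1 / 2 : ℝ)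
  have hsqrt : HasDerivAt (fun v : ℝ ↦ √(S + v ^ 2)) (a / √(S + a ^ 2)) a := by
    convert ((hasDerivAt_pow 2 a).const_add S).sqrt hS using 1
    field_simp
    norm_num [mul_comm]
  rw [Real.sign_eq_signType_sign, mul_div_assoc]
  exact (hquad.add ((hasDerivAt_abs ha).const_mul lam)).sub (hsqrt.const_mul lam)

theorem l12Section_eq_half_sq (lam c v : ℝ) : l12Section lam c 0 v = (1 / 2) * (v - c) ^ 2 := by
  simp [l12Section, Real.sqrt_sq_eq_abs]

theorem eq_zero_of_l12Section_zero_le {lam c : ℝ}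
    (h : ∀ v, l12Section lam c 0 0 ≤ l12Section lam c 0 v) : c = 0 := by
  have := h c
  simp only [l12Section_eq_half_sq, sub_self] at this
  nlinarith

theorem abs_le_of_forall_mul_le {c lam : ℝ} (h : ∀ v, v * c ≤ (1 / 2) * v ^ 2 + lam * |v|) :
    |c| ≤ lam := by
  by_contra! hlt
  -- test against `v = c ∓ lam`, the minimizer of `½v² - vc + λ|v|` when `|c| > λ`
  rcases le_or_gt 0 c with hc | hc
  · rw [abs_of_nonneg hc] at hlt
    have := h (c - lam)
    rw [abs_of_pos (by linarith)] at this
    nlinarith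
  · rw [abs_of_neg hc] at hlt
    have := h (c + lam)
    rw [abs_of_neg (by linarith)] at this
    nlinarith

theorem abs_le_of_l12Section_zero_le {lam c S : ℝ} (hlam : 0 ≤ lam)
    (h : ∀ v, l12Section lam c S 0 ≤ l12Section lam c S v) : |c| ≤ lam := by
  refine abs_le_of_forall_mul_le fun v ↦ ?_
  have hsqrt : lam * √S ≤ lam * √(S + v ^ 2) := by gcongr; nlinarith
  have := h v
  simp only [l12Section, abs_zero, mul_zero, add_zero, ne_eq, OfNat.ofNat_ne_zero,
    not_false_eq_true, zero_pow] at this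
  nlinarith

theorem l12_prox_first_order_conditions_general
    (d : ℕ) (lam : ℝ) (hlam : 0 < lam) (z : Fin d → ℝ) (hz : z ≠ 0)
    (phi : (Fin d → ℝ) → ℝ)
    (hphi : ∀ x : Fin d → ℝ, phi x =
      (1 / 2) * (∑ i, (x i - z i) ^ 2)
        + lam * ((∑ i, |x i|) - Real.sqrt (∑ i, (x i) ^ 2)))
    (xstar : Fin d → ℝ) (hxstar : ∀ y : Fin d → ℝ, phi xstar ≤ phi y) :
    xstar ≠ 0 ∧
      (∀ i : Fin d, xstar i ≠ 0 →
        xstar i - z i + lam * Real.sign (xstar i)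
          - lam * xstar i / Real.sqrt (∑ j, (xstar j) ^ 2) = 0) ∧
      (∀ i : Fin d, xstar i = 0 → |z i| ≤ lam) := by
  have hphi' : phi = l12Obj lam z := funext hphi
  have hmin : ∀ y, l12Obj lam z xstar ≤ l12Obj lam z y := hphi' ▸ hxstar
  have hsec := l12Section_le_of_forall_l12Obj_le hmin
  refine ⟨fun h0 ↦ hz (funext fun j ↦ ?_), fun i hi ↦ ?_, fun i hi ↦ ?_⟩
  · have := hsec j
    simp only [h0, Pi.zero_apply] at this
    exact eq_zero_of_l12Section_zero_le (by simpa using this)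
  · have hnorm : ∑ j, xstar j ^ 2 ≠ 0 := fun h ↦ hi (by
      simpa using (sum_eq_zero_iff_of_nonneg (fun j _ ↦ sq_nonneg (xstar j))).1 h i)
    have hder := hasDerivAt_l12Section (lam := lam) (c := z i) hi
      (by rwa [sub_add_cancel] : ∑ j, xstar j ^ 2 - xstar i ^ 2 + xstar i ^ 2 ≠ 0)
    rw [sub_add_cancel] at hder
    have hloc : IsLocalMin (l12Section lam (z i) _) (xstar i) :=
      Filter.Eventually.of_forall (hsec i)
    exact hloc.hasDerivAt_eq_zero hder
  · exact abs_le_of_l12Section_zero_le hlam.le (hi ▸ hsec i)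

/-- For `λ > 0`, `z ≠ 0` and `x*` a global minimizer of
`φ(x) = (1/2)‖x − z‖₂² + λ(‖x‖₁ − ‖x‖₂)`, one has `x* ≠ 0` and the first-order
optimality conditions: if `x*_i ≠ 0` then
`x*_i − z_i + λ·sign(x*_i) − λ·x*_i/‖x*‖₂ = 0`; if `x*_i = 0` then `|z_i| ≤ λ`. -/
theorem l12_prox_first_order_conditions
    (d : ℕ) (hd : 1 ≤ d) (lam : ℝ) (hlam : 0 < lam) (z : Fin d → ℝ) (hz : z ≠ 0)
    (phi : (Fin d → ℝ) → ℝ)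
    (hphi : ∀ x : Fin d → ℝ, phi x =
      (1 / 2) * (∑ i, (x i - z i) ^ 2)
        + lam * ((∑ i, |x i|) - Real.sqrt (∑ i, (x i) ^ 2)))
    (xstar : Fin d → ℝ) (hxstar : ∀ y : Fin d → ℝ, phi xstar ≤ phi y) :
    xstar ≠ 0 ∧
      (∀ i : Fin d, xstar i ≠ 0 →
        xstar i - z i + lam * Real.sign (xstar i)
          - lam * xstar i / Real.sqrt (∑ j, (xstar j) ^ 2) = 0) ∧
      (∀ i : Fin d, xstar i = 0 → |z i| ≤ lam) :=
  l12_prox_first_order_conditions_general d lam hlam z hz phi hphi xstar hxstar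
end

section
/- Let d ≥ 1, λ > 0 and z ∈ ℝ^d. Define w ∈ ℝ^d by w_i = sign(z_i)·max(|z_i| − λ, 0), and suppose w ≠ 0. Then x* = (1 + λ/‖w‖₂)·w is a global minimizer of φ(x) = (1/2)‖x − z‖₂² + λ(‖x‖₁ − ‖x‖₂), and every global minimizer of φ equals (1 + λ/‖w‖₂)·w. -/
set_option maxHeartbeats 1000000 in
/-- For `λ > 0` and `z ∈ ℝ^d`, let `w_i = sign(z_i)·max(|z_i| − λ, 0)`
(soft-thresholding) and suppose `w ≠ 0`. Then `x* = (1 + λ/‖w‖₂)·w` is a global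
minimizer of `φ(x) = (1/2)‖x − z‖₂² + λ(‖x‖₁ − ‖x‖₂)`, and every global minimizer
of `φ` equals `(1 + λ/‖w‖₂)·w`. -/
theorem l12_prox_closed_form_nonzero_soft_threshold
    (d : ℕ) (hd : 1 ≤ d) (lam : ℝ) (hlam : 0 < lam) (z : Fin d → ℝ)
    (w : Fin d → ℝ)
    (hw : ∀ i : Fin d, w i = Real.sign (z i) * max (|z i| - lam) 0)
    (hwne : w ≠ 0)
    (phi : (Fin d → ℝ) → ℝ)
    (hphi : ∀ x : Fin d → ℝ, phi x =
      (1 / 2) * (∑ i, (x i - z i) ^ 2)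
        + lam * ((∑ i, |x i|) - Real.sqrt (∑ i, (x i) ^ 2)))
    (xstar : Fin d → ℝ)
    (hxstar : xstar = fun i => (1 + lam / Real.sqrt (∑ j, (w j) ^ 2)) * w i) :
    (∀ y : Fin d → ℝ, phi xstar ≤ phi y) ∧
      (∀ x : Fin d → ℝ, (∀ y : Fin d → ℝ, phi x ≤ phi y) → x = xstar) := by
  classical
  set m : Fin d → ℝ := fun i => max (|z i| - lam) 0 with hm
  have hm0 : ∀ i, 0 ≤ m i := fun i => le_max_right _ _
  -- basic per-coordinate facts about w and m
  have habs_w : ∀ i, |w i| = m i := by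
    intro i
    rw [hw i, abs_mul]
    show |Real.sign (z i)| * |m i| = m i
    rcases lt_trichotomy (z i) 0 with h | h | h
    · rw [Real.sign_of_neg h, abs_of_nonneg (hm0 i)]; simp
    · have hmi : m i = 0 := max_eq_right (by simp [h]; linarith)
      simp [h, hmi]
    · rw [Real.sign_of_pos h, abs_of_nonneg (hm0 i)]; simp
  have hsq_w : ∀ i, (w i) ^ 2 = (m i) ^ 2 := by
    intro i; rw [← sq_abs (w i), habs_w i]
  have hwz : ∀ i, w i * z i = m i * |z i| := by
    intro i
    rw [hw i]
    show Real.sign (z i) * m i * z i = m i * |z i|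
    rcases lt_trichotomy (z i) 0 with h | h | h
    · rw [Real.sign_of_neg h, abs_of_neg h]; ring
    · simp [h]
    · rw [Real.sign_of_pos h, abs_of_pos h]; ring
  have hmz : ∀ i, m i * |z i| = m i * (m i + lam) := by
    intro i
    rcases le_or_gt (|z i|) lam with h | h
    · have hmi : m i = 0 := max_eq_right (by linarith)
      rw [hmi]; ring
    · have hmi : m i = |z i| - lam := max_eq_left (by linarith)
      rw [hmi]; ring
  have hzlem : ∀ i, |z i| ≤ lam + m i := by
    intro i
    rcases le_or_gt (|z i|) lam with h | h
    · linarith [hm0 i]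
    · have hmi : m i = |z i| - lam := max_eq_left (by linarith)
      linarith
  -- norms
  set S : ℝ := ∑ j, (w j) ^ 2 with hS
  have hSm : S = ∑ j, (m j) ^ 2 := Finset.sum_congr rfl fun i _ => hsq_w i
  have hSpos : 0 < S := by
    obtain ⟨i, hi⟩ := Function.ne_iff.mp hwne
    have h2 : 0 < (w i) ^ 2 := pow_pos (abs_pos.mpr hi) 2 |>.trans_eq (sq_abs _)
    exact lt_of_lt_of_le h2 (Finset.single_le_sum (f := fun j => (w j) ^ 2)
      (fun j _ => sq_nonneg _) (Finset.mem_univ i))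
  set W : ℝ := Real.sqrt S with hWdef
  have hWpos : 0 < W := Real.sqrt_pos.mpr hSpos
  have hWsq : W ^ 2 = S := Real.sq_sqrt (le_of_lt hSpos)
  obtain ⟨c, hc⟩ : ∃ c : ℝ, c = 1 + lam / W := ⟨_, rfl⟩
  have hcpos : 0 < c := by rw [hc]; positivity
  have hxs : ∀ i, xstar i = c * w i := by
    intro i; rw [hxstar]; simp only [← hc]
  have hcW : c * W = W + lam := by
    rw [hc]; field_simp
  -- the fundamental identity:
  -- phi y = D + ½(r − R)² + A(y) + B(y), R = W + lam, D = ½Σz² − ½R²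
  have hident : ∀ y : Fin d → ℝ, phi y =
      ((1/2) * (∑ i, (z i) ^ 2) - (1/2) * (W + lam) ^ 2)
      + (1/2) * (Real.sqrt (∑ i, (y i) ^ 2) - (W + lam)) ^ 2
      + (∑ i, (lam * |y i| - y i * z i + |y i| * m i))
      + (W * Real.sqrt (∑ i, (y i) ^ 2) - ∑ i, |y i| * m i) := by
    intro y
    have hr2 : (Real.sqrt (∑ i, (y i) ^ 2)) ^ 2 = ∑ i, (y i) ^ 2 :=
      Real.sq_sqrt (Finset.sum_nonneg fun i _ => sq_nonneg _)
    have esum : (∑ i, (y i - z i) ^ 2)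
        = (∑ i, (y i) ^ 2) - 2 * (∑ i, y i * z i) + (∑ i, (z i) ^ 2) := by
      have h1 : ∀ i : Fin d, (y i - z i) ^ 2
          = (y i) ^ 2 - 2 * (y i * z i) + (z i) ^ 2 := fun i => by ring
      rw [Finset.sum_congr rfl fun i _ => h1 i, Finset.sum_add_distrib,
        Finset.sum_sub_distrib, ← Finset.mul_sum]
    have epc : (∑ i, (lam * |y i| - y i * z i + |y i| * m i))
        = lam * (∑ i, |y i|) - (∑ i, y i * z i) + (∑ i, |y i| * m i) := by
      rw [Finset.sum_add_distrib, Finset.sum_sub_distrib, ← Finset.mul_sum]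
    rw [hphi y, esum, epc]
    linear_combination (-(1/2 : ℝ)) * hr2
  -- phi xstar = D
  have hphix : phi xstar = (1/2) * (∑ i, (z i) ^ 2) - (1/2) * (W + lam) ^ 2 := by
    have s3 : (∑ i, (xstar i) ^ 2) = c ^ 2 * S := by
      rw [hS, Finset.mul_sum]
      exact Finset.sum_congr rfl fun i _ => by rw [hxs i]; ring
    have hrx : Real.sqrt (∑ i, (xstar i) ^ 2) = c * W := by
      rw [s3, hWdef, Real.sqrt_mul (sq_nonneg c), Real.sqrt_sq (le_of_lt hcpos)]
    have s1 : (∑ i, xstar i * z i) = c * (S + lam * (∑ i, m i)) := by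
      have h1 : ∀ i : Fin d, xstar i * z i = c * ((m i) ^ 2 + lam * m i) := by
        intro i; rw [hxs i, mul_assoc, hwz i, hmz i]; ring
      rw [Finset.sum_congr rfl fun i _ => h1 i, ← Finset.mul_sum,
        Finset.sum_add_distrib, ← Finset.mul_sum, ← hSm]
    have s2 : (∑ i, |xstar i|) = c * (∑ i, m i) := by
      rw [Finset.mul_sum]
      refine Finset.sum_congr rfl fun i _ => ?_
      rw [hxs i, abs_mul, abs_of_pos hcpos, habs_w i]
    have esum : (∑ i, (xstar i - z i) ^ 2)
        = (∑ i, (xstar i) ^ 2) - 2 * (∑ i, xstar i * z i) + (∑ i, (z i) ^ 2) := by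
      have h1 : ∀ i : Fin d, (xstar i - z i) ^ 2
          = (xstar i) ^ 2 - 2 * (xstar i * z i) + (z i) ^ 2 := fun i => by ring
      rw [Finset.sum_congr rfl fun i _ => h1 i, Finset.sum_add_distrib,
        Finset.sum_sub_distrib, ← Finset.mul_sum]
    rw [hphi xstar, esum, hrx, s1, s2, s3]
    linear_combination ((1/2) * c * W - (1/2) * (W + lam)) * hcW
      + (c - (1/2) * c ^ 2) * hWsq
  -- nonnegativity of the pieces
  have hApc : ∀ (y : Fin d → ℝ) (i : Fin d),
      0 ≤ lam * |y i| - y i * z i + |y i| * m i := by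
    intro y i
    have h1 : y i * z i ≤ |y i| * |z i| := by
      calc y i * z i ≤ |y i * z i| := le_abs_self _
        _ = |y i| * |z i| := abs_mul _ _
    have h2 : |y i| * |z i| ≤ |y i| * (lam + m i) :=
      mul_le_mul_of_nonneg_left (hzlem i) (abs_nonneg _)
    nlinarith
  have hA : ∀ y : Fin d → ℝ, 0 ≤ ∑ i, (lam * |y i| - y i * z i + |y i| * m i) :=
    fun y => Finset.sum_nonneg fun i _ => hApc y i
  have hB : ∀ y : Fin d → ℝ,
      (∑ i, |y i| * m i) ≤ W * Real.sqrt (∑ i, (y i) ^ 2) := by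
    intro y
    have hcs := Real.sum_mul_le_sqrt_mul_sqrt Finset.univ (fun i => |y i|) m
    have h1 : (∑ i, |y i| ^ 2) = ∑ i, (y i) ^ 2 :=
      Finset.sum_congr rfl fun i _ => sq_abs _
    have h2 : Real.sqrt (∑ i, (m i) ^ 2) = W := by rw [← hSm]
    rw [h1, h2] at hcs
    calc (∑ i, |y i| * m i) ≤ Real.sqrt (∑ i, (y i) ^ 2) * W := hcs
      _ = W * Real.sqrt (∑ i, (y i) ^ 2) := mul_comm _ _
  -- minimality
  have hmin : ∀ y : Fin d → ℝ, phi xstar ≤ phi y := by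
    intro y
    rw [hident y, hphix]
    have h1 := hA y
    have h2 := hB y
    nlinarith [sq_nonneg (Real.sqrt (∑ i, (y i) ^ 2) - (W + lam))]
  refine ⟨hmin, ?_⟩
  -- uniqueness
  intro x hx
  have hxle : phi x ≤ phi xstar := hx xstar
  set r : ℝ := Real.sqrt (∑ i, (x i) ^ 2) with hrdef
  have hrnn : 0 ≤ r := Real.sqrt_nonneg _
  have hr2 : r ^ 2 = ∑ i, (x i) ^ 2 :=
    Real.sq_sqrt (Finset.sum_nonneg fun i _ => sq_nonneg _)
  rw [hphix] at hxle
  have hAx := hA x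
  have hBx := hB x
  have hsq := sq_nonneg (r - (W + lam))
  have hall : (1/2) * (r - (W + lam)) ^ 2
      + (∑ i, (lam * |x i| - x i * z i + |x i| * m i))
      + (W * r - ∑ i, |x i| * m i) ≤ 0 := by
    rw [hident x] at hxle
    linarith
  have hAzero : (∑ i, (lam * |x i| - x i * z i + |x i| * m i)) = 0 := by
    linarith
  have hBzero : (∑ i, |x i| * m i) = W * r := by linarith
  have hrsq0 : (r - (W + lam)) ^ 2 = 0 := by linarith
  have hrR : r = W + lam := by
    have := pow_eq_zero_iff (n := 2) (by norm_num) |>.mp hrsq0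
    linarith
  -- per-coordinate vanishing of A-terms
  have hApc0 : ∀ i, lam * |x i| - x i * z i + |x i| * m i = 0 := fun i =>
    (Finset.sum_eq_zero_iff_of_nonneg fun i _ => hApc x i).mp hAzero i
      (Finset.mem_univ i)
  -- Cauchy–Schwarz equality forces |x i| = c * m i
  have hprop : ∀ i, |x i| = c * m i := by
    have hzsum : (∑ i, (S * |x i| - (W * (W + lam)) * m i) ^ 2) = 0 := by
      have hexp : ∀ i : Fin d, (S * |x i| - (W * (W + lam)) * m i) ^ 2
          = S ^ 2 * (x i) ^ 2 - 2 * S * (W * (W + lam)) * (|x i| * m i)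
            + (W * (W + lam)) ^ 2 * (m i) ^ 2 := by
        intro i
        have h1 : |x i| ^ 2 = (x i) ^ 2 := sq_abs _
        linear_combination (S ^ 2) * h1
      rw [Finset.sum_congr rfl fun i _ => hexp i, Finset.sum_add_distrib,
        Finset.sum_sub_distrib, ← Finset.mul_sum, ← Finset.mul_sum, ← Finset.mul_sum,
        hBzero, ← hSm, ← hr2, hrR]
      linear_combination (-(S * (W + lam) ^ 2)) * hWsq
    intro i
    have h0 : S * |x i| - (W * (W + lam)) * m i = 0 := by
      have h1 := (Finset.sum_eq_zero_iff_of_nonneg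
        fun i _ => sq_nonneg (S * |x i| - (W * (W + lam)) * m i)).mp hzsum i
        (Finset.mem_univ i)
      exact pow_eq_zero_iff (n := 2) (by norm_num) |>.mp h1
    have hcs : c * S = W * (W + lam) := by
      calc c * S = c * W * W := by rw [← hWsq]; ring
        _ = W * (W + lam) := by rw [hcW]; ring
    have h2 : S * |x i| = S * (c * m i) := by
      rw [show S * (c * m i) = c * S * m i by ring, hcs]; linarith
    exact mul_left_cancel₀ (ne_of_gt hSpos) h2
  -- conclude coordinatewise
  funext i
  rw [hxs i, hw i]
  show x i = c * (Real.sign (z i) * m i)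
  rcases eq_or_lt_of_le (hm0 i) with hmi | hmi
  · have h1 : |x i| = 0 := by rw [hprop i, ← hmi]; ring
    have h2 : x i = 0 := abs_eq_zero.mp h1
    rw [h2, ← hmi]; ring
  · -- m i > 0 : |z i| = m i + lam, signs align
    have hzi : |z i| = m i + lam := mul_left_cancel₀ (ne_of_gt hmi) (hmz i)
    have hxiabs : |x i| = c * m i := hprop i
    have hxipos : 0 < |x i| := by rw [hxiabs]; positivity
    have hxz : x i * z i = |x i| * (lam + m i) := by
      have h3 := hApc0 i
      linarith
    rcases lt_trichotomy (z i) 0 with h | h | h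
    · rw [Real.sign_of_neg h]
      have hz2 : z i = -(m i + lam) := by
        rw [abs_of_neg h] at hzi; linarith
      have h4 : (x i + |x i|) * (lam + m i) = 0 := by
        rw [hz2] at hxz; linear_combination -hxz
      rcases mul_eq_zero.mp h4 with h5 | h5
      · have : x i = -|x i| := by linarith
        rw [this, hxiabs]; ring
      · exfalso; linarith [hm0 i]
    · exfalso; rw [h, abs_zero] at hzi; linarith [hm0 i]
    · rw [Real.sign_of_pos h]
      have hz2 : z i = m i + lam := by rw [abs_of_pos h] at hzi; linarith
      have h4 : (x i - |x i|) * (lam + m i) = 0 := by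
        rw [hz2] at hxz; linear_combination hxz
      rcases mul_eq_zero.mp h4 with h5 | h5
      · have : x i = |x i| := by linarith
        rw [this, hxiabs]; ring
      · exfalso; linarith [hm0 i]
end

section
/- Let d ≥ 1, λ > 0 and z ∈ ℝ^d with z ≠ 0, and suppose |z_i| ≤ λ for every i (i.e., the soft-thresholding w of z at level λ is zero). Let j be an index attaining the maximum of |z_i| over i = 1, …, d, and define x* ∈ ℝ^d by x*_j = z_j and x*_i = 0 for i ≠ j. Then x* is a global minimizer of φ(x) = (1/2)‖x − z‖₂² + λ(‖x‖₁ − ‖x‖₂). -/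
/-- For `λ > 0`, `z ≠ 0` with `|z_i| ≤ λ` for all `i` (so the
soft-thresholding of `z` is zero), and `j` an index attaining `max_i |z_i|`, the
vector `x*` with `x*_j = z_j` and all other coordinates `0` is a global minimizer
of `φ(x) = (1/2)‖x − z‖₂² + λ(‖x‖₁ − ‖x‖₂)`. -/
theorem l12_prox_closed_form_zero_soft_threshold
    (d : ℕ) (hd : 1 ≤ d) (lam : ℝ) (hlam : 0 < lam) (z : Fin d → ℝ) (hz : z ≠ 0)
    (hle : ∀ i : Fin d, |z i| ≤ lam)
    (j : Fin d) (hj : ∀ i : Fin d, |z i| ≤ |z j|)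
    (xstar : Fin d → ℝ)
    (hxstar : xstar = fun i => if i = j then z j else 0)
    (phi : (Fin d → ℝ) → ℝ)
    (hphi : ∀ x : Fin d → ℝ, phi x =
      (1 / 2) * (∑ i, (x i - z i) ^ 2)
        + lam * ((∑ i, |x i|) - Real.sqrt (∑ i, (x i) ^ 2))) :
    ∀ y : Fin d → ℝ, phi xstar ≤ phi y := by
  intro y
  set a := |z j| with ha
  set S := ∑ i, (z i) ^ 2 with hS
  -- compute phi xstar
  have hsum1 : ∑ i, (xstar i - z i) ^ 2 = S - z j ^ 2 := by
    rw [hxstar, hS]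
    have : ∀ i : Fin d, ((if i = j then z j else 0) - z i) ^ 2
        = z i ^ 2 - (if i = j then (z i)^2 else 0) := by
      intro i; by_cases h : i = j <;> simp [h]
    simp only [this, Finset.sum_sub_distrib, Finset.sum_ite_eq' Finset.univ j,
      Finset.mem_univ, if_true]
  have hsum2 : ∑ i, |xstar i| = a := by
    rw [hxstar]
    have : ∀ i : Fin d, |if i = j then z j else 0| = if i = j then a else 0 := by
      intro i; by_cases h : i = j <;> simp [h, ha]
    simp only [this, Finset.sum_ite_eq' Finset.univ j, Finset.mem_univ, if_true]
  have hsum3 : Real.sqrt (∑ i, (xstar i) ^ 2) = a := by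
    rw [hxstar]
    have : ∀ i : Fin d, (if i = j then z j else 0) ^ 2 = if i = j then (z j)^2 else 0 := by
      intro i; by_cases h : i = j <;> simp [h]
    simp only [this, Finset.sum_ite_eq' Finset.univ j, Finset.mem_univ, if_true]
    rw [Real.sqrt_sq_eq_abs]
  have hstar : phi xstar = (1/2) * (S - z j ^ 2) := by
    rw [hphi, hsum1, hsum2, hsum3]; ring
  -- analyze phi y
  set t := Real.sqrt (∑ i, (y i) ^ 2) with ht
  set u := ∑ i, |y i| with hu
  have htnn : 0 ≤ t := Real.sqrt_nonneg _
  have hunn : 0 ≤ u := Finset.sum_nonneg fun i _ => abs_nonneg _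
  have ht2 : t ^ 2 = ∑ i, (y i) ^ 2 := by
    rw [ht, Real.sq_sqrt (Finset.sum_nonneg fun i _ => sq_nonneg _)]
  have hut : t ≤ u := by
    have h1 : ∑ i, (y i) ^ 2 ≤ u ^ 2 := by
      rw [hu]
      calc ∑ i, (y i) ^ 2 = ∑ i, |y i| ^ 2 := by simp [sq_abs]
        _ ≤ (∑ i, |y i|) ^ 2 :=
          Finset.sum_sq_le_sq_sum_of_nonneg fun i _ => abs_nonneg _
    calc t ≤ Real.sqrt (u ^ 2) := Real.sqrt_le_sqrt h1
      _ = u := Real.sqrt_sq hunn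
  -- inner product bound
  have hP : ∑ i, y i * z i ≤ a * u := by
    rw [hu, Finset.mul_sum]
    refine Finset.sum_le_sum fun i _ => ?_
    calc y i * z i ≤ |y i * z i| := le_abs_self _
      _ = |y i| * |z i| := abs_mul _ _
      _ = |z i| * |y i| := mul_comm _ _
      _ ≤ a * |y i| := mul_le_mul_of_nonneg_right (hj i) (abs_nonneg _)
  -- expand phi y
  have hsy : ∑ i, (y i - z i) ^ 2 = t ^ 2 - 2 * (∑ i, y i * z i) + S := by
    rw [ht2, hS]
    have h : ∀ i : Fin d, (y i - z i) ^ 2 = y i ^ 2 - 2 * (y i * z i) + z i ^ 2 :=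
      fun i => by ring
    simp only [h, Finset.sum_add_distrib, Finset.sum_sub_distrib, ← Finset.mul_sum]
  have hyphi : phi y = (1/2) * (t ^ 2 - 2 * (∑ i, y i * z i) + S) + lam * (u - t) := by
    rw [hphi, hsy]
  have hal : a ≤ lam := hle j
  have haz : a ^ 2 = z j ^ 2 := sq_abs _
  rw [hstar, hyphi]
  nlinarith [sq_nonneg (t - a), mul_nonneg (sub_nonneg.2 hal) (sub_nonneg.2 hut), hP]
end

section
/- Let m ≤ n, λ > 0, and Z ∈ ℝ^{m×n} with singular value decomposition Z = U Σ Vᵀ, where Σ = diag(σ₁, …, σ_m) with σ₁ ≥ ⋯ ≥ σ_m ≥ 0, U ∈ ℝ^{m×m} and V ∈ ℝ^{n×m} having orthonormal columns. Define w ∈ ℝ^m by w_i = max(σ_i − λ, 0), and suppose w ≠ 0. Then X* = U · diag((1 + λ/‖w‖₂)·w) · Vᵀ is a global minimizer over X ∈ ℝ^{m×n} of Ψ(X) = (1/2)‖X − Z‖_F² + λ(‖X‖_* − ‖X‖_F). -/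
/-!
Write `a` for the diagonal of `Uᵀ Y V`. Von Neumann's trace inequality gives
`∑ |aᵢ| ≤ ‖Y‖_*`, Bessel's inequality gives `‖a‖₂ ≤ ‖Y‖_F`, and `⟪Y, Z⟫ = ∑ σᵢ aᵢ`.
Since `0 ≤ σᵢ ≤ λ + wᵢ`, Cauchy–Schwarz turns these into
`Ψ(Y) ≥ ½‖σ‖² + ½‖Y‖_F² - (λ + ‖w‖₂) ‖Y‖_F ≥ ½‖σ‖² - ½(λ + ‖w‖₂)²`.
The scaling `1 + λ/‖w‖₂` is chosen so that `‖X*‖_F = ‖w‖₂ + λ`, which makes both inequalities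
equalities at `X*`.
-/

open Matrix

/-- Nuclear norm of a real `m × n` matrix: the sum of its singular values, i.e. the
sum of the square roots of the eigenvalues of `X Xᵀ`. -/
noncomputable def nuclearNorm {m n : ℕ} (X : Matrix (Fin m) (Fin n) ℝ) : ℝ :=
  ∑ i, Real.sqrt ((Matrix.isHermitian_mul_conjTranspose_self X).eigenvalues i)

/-- Frobenius norm of a real `m × n` matrix. -/
noncomputable def frobNorm {m n : ℕ} (X : Matrix (Fin m) (Fin n) ℝ) : ℝ :=
  Real.sqrt (∑ i, ∑ j, (X i j) ^ 2)

namespace Matrix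

variable {ι ι' κ : Type*}

theorem mulVec_dotProduct_mulVec [Fintype ι] [Fintype κ] [DecidableEq κ] {A : Matrix ι κ ℝ}
    (hA : Aᵀ * A = 1) (x : κ → ℝ) :
    (A *ᵥ x) ⬝ᵥ (A *ᵥ x) = x ⬝ᵥ x := by
  rw [dotProduct_mulVec, ← vecMul_transpose, vecMul_vecMul, hA, vecMul_one]

/-- Bessel's inequality for the orthonormal columns of `A`. -/
theorem vecMul_dotProduct_vecMul_le [Fintype ι] [Fintype κ] [DecidableEq κ] {A : Matrix ι κ ℝ}
    (hA : Aᵀ * A = 1) (x : ι → ℝ) :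
    (x ᵥ* A) ⬝ᵥ (x ᵥ* A) ≤ x ⬝ᵥ x := by
  set p := x ᵥ* A
  have hxp : x ⬝ᵥ (A *ᵥ p) = p ⬝ᵥ p := dotProduct_mulVec x A p
  have hres : (x - A *ᵥ p) ⬝ᵥ (x - A *ᵥ p) = x ⬝ᵥ x - p ⬝ᵥ p := by
    simp only [sub_dotProduct, dotProduct_sub, mulVec_dotProduct_mulVec hA]
    rw [dotProduct_comm (A *ᵥ p) x, hxp]
    ring
  linarith [hres ▸ dotProduct_self_star_nonneg (x - A *ᵥ p)]

theorem sum_sq_apply_eq_mul_transpose_apply [Fintype ι'] (M : Matrix ι ι' ℝ) (i : ι) :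
    ∑ j, M i j ^ 2 = (M * Mᵀ) i i := by
  simp only [mul_apply, transpose_apply, sq]

theorem sum_sq_transpose [Fintype ι] [Fintype ι'] (M : Matrix ι ι' ℝ) :
    ∑ j, ∑ i, Mᵀ j i ^ 2 = ∑ i, ∑ j, M i j ^ 2 :=
  Finset.sum_comm

theorem sum_sq_mul_apply_le [Fintype ι'] [Fintype κ] [DecidableEq κ] {A : Matrix ι' κ ℝ}
    (hA : Aᵀ * A = 1) (M : Matrix ι ι' ℝ) (i : ι) :
    ∑ k, (M * A) i k ^ 2 ≤ ∑ j, M i j ^ 2 := by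
  simpa only [mul_apply_eq_vecMul, dotProduct, sq] using vecMul_dotProduct_vecMul_le hA (M i)

theorem sum_sq_mul_le [Fintype ι] [Fintype ι'] [Fintype κ] [DecidableEq κ] {A : Matrix ι' κ ℝ}
    (hA : Aᵀ * A = 1) (M : Matrix ι ι' ℝ) :
    ∑ i, ∑ k, (M * A) i k ^ 2 ≤ ∑ i, ∑ j, M i j ^ 2 :=
  Finset.sum_le_sum fun i _ => sum_sq_mul_apply_le hA M i

theorem sum_sq_mul_transpose [Fintype ι] [Fintype ι'] [Fintype κ] [DecidableEq κ]
    {A : Matrix ι' κ ℝ} (hA : Aᵀ * A = 1) (M : Matrix ι κ ℝ) :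
    ∑ i, ∑ j, (M * Aᵀ) i j ^ 2 = ∑ i, ∑ k, M i k ^ 2 := by
  congr! 1 with i
  simpa only [mul_apply_eq_vecMul, vecMul_transpose, dotProduct, sq] using
    mulVec_dotProduct_mulVec hA (M i)

theorem sum_sq_mul_diagonal_mul_transpose [Fintype ι] [Fintype ι'] [Fintype κ] [DecidableEq κ]
    {U : Matrix ι κ ℝ} {V : Matrix ι' κ ℝ} (hU : Uᵀ * U = 1) (hV : Vᵀ * V = 1) (d : κ → ℝ) :
    ∑ i, ∑ j, (U * diagonal d * Vᵀ) i j ^ 2 = ∑ k, d k ^ 2 := by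
  rw [sum_sq_mul_transpose hV, ← sum_sq_transpose, transpose_mul, diagonal_transpose,
    sum_sq_mul_transpose hU]
  simp [diagonal_apply, ite_pow]

theorem sum_sq_diag_le [Fintype ι] [Fintype ι'] [Fintype κ] [DecidableEq κ]
    {U : Matrix ι κ ℝ} {V : Matrix ι' κ ℝ} (hU : Uᵀ * U = 1) (hV : Vᵀ * V = 1)
    (Y : Matrix ι ι' ℝ) :
    ∑ k, (Uᵀ * Y * V) k k ^ 2 ≤ ∑ i, ∑ j, Y i j ^ 2 :=
  calc ∑ k, (Uᵀ * Y * V) k k ^ 2 ≤ ∑ k, ∑ l, (Uᵀ * Y * V) k l ^ 2 := by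
        gcongr with k
        exact Finset.single_le_sum (fun l _ => sq_nonneg ((Uᵀ * Y * V) k l)) (Finset.mem_univ k)
    _ ≤ ∑ k, ∑ j, (Uᵀ * Y) k j ^ 2 := sum_sq_mul_le hV _
    _ = ∑ j, ∑ k, (Yᵀ * U) j k ^ 2 := by
        rw [← sum_sq_transpose, transpose_mul, transpose_transpose]
    _ ≤ ∑ j, ∑ i, Yᵀ j i ^ 2 := sum_sq_mul_le hU _
    _ = ∑ i, ∑ j, Y i j ^ 2 := sum_sq_transpose Y

theorem sum_mul_mul_diagonal_mul_transpose [Fintype ι] [Fintype ι'] [Fintype κ] [DecidableEq κ]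
    (U : Matrix ι κ ℝ) (V : Matrix ι' κ ℝ) (σ : κ → ℝ) (Y : Matrix ι ι' ℝ) :
    ∑ i, ∑ j, Y i j * (U * diagonal σ * Vᵀ) i j = ∑ k, σ k * (Uᵀ * Y * V) k k :=
  calc ∑ i, ∑ j, Y i j * (U * diagonal σ * Vᵀ) i j = trace (Y * (U * diagonal σ * Vᵀ)ᵀ) := by
        simp only [trace, diag, mul_apply, transpose_apply]
    _ = trace (Y * V * diagonal σ * Uᵀ) := by
        simp only [transpose_mul, transpose_transpose, diagonal_transpose, Matrix.mul_assoc]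
    _ = trace (Uᵀ * Y * V * diagonal σ) := by
        rw [trace_mul_comm]
        simp only [Matrix.mul_assoc]
    _ = ∑ k, σ k * (Uᵀ * Y * V) k k := by simp only [trace, diag, mul_diagonal, mul_comm]

theorem sum_abs_diag_transpose_mul_le [Fintype ι] [Fintype κ] (G T : Matrix κ ι ℝ) :
    ∑ i, |(Gᵀ * T) i i| ≤ ∑ k, √(∑ i, G k i ^ 2) * √(∑ i, T k i ^ 2) :=
  calc ∑ i, |(Gᵀ * T) i i| ≤ ∑ i, ∑ k, |G k i| * |T k i| := by
        gcongr with i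
        simpa only [mul_apply, transpose_apply, abs_mul] using
          Finset.abs_sum_le_sum_abs (fun k => G k i * T k i) Finset.univ
    _ = ∑ k, ∑ i, |G k i| * |T k i| := Finset.sum_comm
    _ ≤ ∑ k, √(∑ i, |G k i| ^ 2) * √(∑ i, |T k i| ^ 2) := by
        gcongr with k
        exact Real.sum_mul_le_sqrt_mul_sqrt _ _ _
    _ = ∑ k, √(∑ i, G k i ^ 2) * √(∑ i, T k i ^ 2) := by simp only [sq_abs]

theorem charpoly_mul_mul_transpose [Fintype ι] [DecidableEq ι] {U : Matrix ι ι ℝ}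
    (hU : Uᵀ * U = 1) (D : Matrix ι ι ℝ) :
    (U * D * Uᵀ).charpoly = D.charpoly := by
  rw [Matrix.mul_assoc, charpoly_mul_comm, Matrix.mul_assoc, hU, Matrix.mul_one]

open Polynomial in
theorem IsHermitian.sum_comp_eigenvalues_of_charpoly_eq [Fintype ι] [DecidableEq ι]
    {H : Matrix ι ι ℝ} (hH : H.IsHermitian) {v : ι → ℝ}
    (h : H.charpoly = (diagonal v).charpoly) (f : ℝ → ℝ) :
    ∑ i, f (hH.eigenvalues i) = ∑ i, f (v i) := by
  have hroots : Finset.univ.val.map hH.eigenvalues = Finset.univ.val.map v := by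
    have := congrArg roots h
    rw [hH.roots_charpoly_eq_eigenvalues, charpoly_diagonal,
      roots_prod _ _ (Finset.prod_ne_zero_iff.mpr fun i _ => X_sub_C_ne_zero (v i))] at this
    simpa using this
  simpa only [Multiset.map_map, Function.comp_def, ← Finset.sum_eq_multiset_sum] using
    congrArg (fun s => (s.map f).sum) hroots

end Matrix

theorem nuclearNorm_mul_diagonal_mul_transpose {m n : ℕ} {U : Matrix (Fin m) (Fin m) ℝ}
    {V : Matrix (Fin n) (Fin m) ℝ} (hU : Uᵀ * U = 1) (hV : Vᵀ * V = 1) {d : Fin m → ℝ}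
    (hd : ∀ i, 0 ≤ d i) :
    nuclearNorm (U * diagonal d * Vᵀ) = ∑ i, d i := by
  have hXX : (U * diagonal d * Vᵀ) * (U * diagonal d * Vᵀ)ᴴ = U * diagonal (d ^ 2) * Uᵀ := by
    rw [conjTranspose_eq_transpose_of_trivial]
    simp only [transpose_mul, diagonal_transpose, transpose_transpose, Matrix.mul_assoc]
    rw [← Matrix.mul_assoc Vᵀ, hV, Matrix.one_mul, ← Matrix.mul_assoc (diagonal d),
      diagonal_mul_diagonal, sq]
    rfl
  have hchar := hXX ▸ charpoly_mul_mul_transpose hU (diagonal (d ^ 2))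
  rw [nuclearNorm, IsHermitian.sum_comp_eigenvalues_of_charpoly_eq _ hchar]
  simp [Real.sqrt_sq (hd _)]

/-- A special case of von Neumann's trace inequality. -/
theorem sum_abs_diag_le_nuclearNorm {m n : ℕ} {κ : Type*} [Fintype κ] [DecidableEq κ]
    {U : Matrix (Fin m) κ ℝ} {V : Matrix (Fin n) κ ℝ} (hU : Uᵀ * U = 1) (hV : Vᵀ * V = 1)
    (Y : Matrix (Fin m) (Fin n) ℝ) :
    ∑ k, |(Uᵀ * Y * V) k k| ≤ nuclearNorm Y := by
  have hH := isHermitian_mul_conjTranspose_self Y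
  set W : Matrix (Fin m) (Fin m) ℝ := ↑hH.eigenvectorUnitary
  have hWW : W * Wᵀ = 1 := by
    simpa [W, star_eq_conjTranspose] using Unitary.coe_mul_star_self hH.eigenvectorUnitary
  have hWtW : Wᵀ * W = 1 := by
    simpa [W, star_eq_conjTranspose] using Unitary.coe_star_mul_self hH.eigenvectorUnitary
  have hdiag : Wᵀ * (Y * Yᵀ) * W = diagonal hH.eigenvalues := by
    simpa [W, star_eq_conjTranspose] using hH.conjStarAlgAut_star_eigenvectorUnitary
  have hsplit : Uᵀ * Y * V = (Wᵀ * U)ᵀ * (Wᵀ * Y * V) := by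
    rw [transpose_mul, transpose_transpose, ← Matrix.mul_assoc, Matrix.mul_assoc Uᵀ W,
      ← Matrix.mul_assoc W, hWW, Matrix.one_mul]
  have hU_rows (k : Fin m) : ∑ i, (Wᵀ * U) k i ^ 2 ≤ 1 :=
    calc ∑ i, (Wᵀ * U) k i ^ 2 ≤ ∑ j, Wᵀ k j ^ 2 := sum_sq_mul_apply_le hU Wᵀ k
      _ = 1 := by rw [sum_sq_apply_eq_mul_transpose_apply, transpose_transpose, hWtW, one_apply_eq]
  have hY_rows (k : Fin m) : ∑ i, (Wᵀ * Y * V) k i ^ 2 ≤ hH.eigenvalues k :=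
    calc ∑ i, (Wᵀ * Y * V) k i ^ 2 ≤ ∑ j, (Wᵀ * Y) k j ^ 2 := sum_sq_mul_apply_le hV _ k
      _ = hH.eigenvalues k := by
        rw [sum_sq_apply_eq_mul_transpose_apply, transpose_mul, transpose_transpose,
          ← diagonal_apply_eq hH.eigenvalues k, ← hdiag]
        simp only [Matrix.mul_assoc]
  calc ∑ k, |(Uᵀ * Y * V) k k|
      ≤ ∑ k, √(∑ i, (Wᵀ * U) k i ^ 2) * √(∑ i, (Wᵀ * Y * V) k i ^ 2) := by
        rw [hsplit]
        exact sum_abs_diag_transpose_mul_le _ _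
    _ ≤ ∑ k, √1 * √(hH.eigenvalues k) := by
        gcongr with k
        · exact hU_rows k
        · exact hY_rows k
    _ = nuclearNorm Y := by simp [nuclearNorm]

theorem sum_mul_sub_mul_sum_abs_le {κ : Type*} [Fintype κ] {σ w : κ → ℝ} {lam : ℝ}
    (hσ : ∀ i, 0 ≤ σ i) (hσw : ∀ i, σ i - lam ≤ w i) (a : κ → ℝ) :
    ∑ i, σ i * a i - lam * ∑ i, |a i| ≤ √(∑ i, w i ^ 2) * √(∑ i, a i ^ 2) :=
  calc ∑ i, σ i * a i - lam * ∑ i, |a i| ≤ ∑ i, w i * |a i| := by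
        rw [Finset.mul_sum, ← Finset.sum_sub_distrib]
        gcongr with i
        nlinarith [le_abs_self (a i), abs_nonneg (a i), hσ i, hσw i]
    _ ≤ √(∑ i, w i ^ 2) * √(∑ i, |a i| ^ 2) := Real.sum_mul_le_sqrt_mul_sqrt _ _ _
    _ = √(∑ i, w i ^ 2) * √(∑ i, a i ^ 2) := by simp only [sq_abs]

theorem scaled_soft_threshold_objective_eq {κ : Type*} [Fintype κ] {σ w : κ → ℝ} {lam c : ℝ}
    (hw : ∀ i, w i = max (σ i - lam) 0) (hc0 : 0 ≤ c)
    (hc : c * √(∑ i, w i ^ 2) = √(∑ i, w i ^ 2) + lam) :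
    (1 / 2) * ∑ i, (c * w i - σ i) ^ 2 + lam * (∑ i, c * w i - √(∑ i, (c * w i) ^ 2))
      = (1 / 2) * ∑ i, σ i ^ 2 - (1 / 2) * (lam + √(∑ i, w i ^ 2)) ^ 2 := by
  set r := √(∑ i, w i ^ 2)
  have hr : r ^ 2 = ∑ i, w i ^ 2 := Real.sq_sqrt (by positivity)
  -- on the support of `w`, `σ i = w i + lam`
  have hwσ (i : κ) : w i * σ i = w i ^ 2 + lam * w i := by
    rcases le_total (σ i - lam) 0 with h | h
    · rw [hw i, max_eq_right h]; ring
    · rw [hw i, max_eq_left h]; ring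
  have hcr : √(∑ i, (c * w i) ^ 2) = c * r := by
    rw [← Real.sqrt_sq (mul_nonneg hc0 (Real.sqrt_nonneg _)), mul_pow, hr, Finset.mul_sum]
    simp only [mul_pow]
  have hexpand : ∑ i, (c * w i - σ i) ^ 2
      = c ^ 2 * r ^ 2 - 2 * c * (r ^ 2 + lam * ∑ i, w i) + ∑ i, σ i ^ 2 := by
    rw [hr, Finset.mul_sum, Finset.mul_sum, ← Finset.sum_add_distrib, Finset.mul_sum,
      ← Finset.sum_sub_distrib, ← Finset.sum_add_distrib]
    refine Finset.sum_congr rfl fun i _ => ?_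
    linear_combination (-2 * c) * hwσ i
  rw [hcr, hexpand, ← Finset.mul_sum]
  -- the two sides differ by `½ (c r - (r + lam))²`
  linear_combination (1 / 2 * (c * r) + 1 / 2 * r + 1 / 2 * lam - r - lam) * hc

noncomputable def proxObjective {m n : ℕ} (lam : ℝ) (Z X : Matrix (Fin m) (Fin n) ℝ) : ℝ :=
  (1 / 2) * (∑ i, ∑ j, (X i j - Z i j) ^ 2) + lam * (nuclearNorm X - frobNorm X)

theorem proxObjective_mul_diagonal_mul_transpose {m n : ℕ} {U : Matrix (Fin m) (Fin m) ℝ}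
    {V : Matrix (Fin n) (Fin m) ℝ} (hU : Uᵀ * U = 1) (hV : Vᵀ * V = 1) (lam : ℝ)
    (σ : Fin m → ℝ) {d : Fin m → ℝ} (hd : ∀ i, 0 ≤ d i) :
    proxObjective lam (U * diagonal σ * Vᵀ) (U * diagonal d * Vᵀ)
      = (1 / 2) * ∑ i, (d i - σ i) ^ 2 + lam * (∑ i, d i - √(∑ i, d i ^ 2)) := by
  have hdiff : U * diagonal d * Vᵀ - U * diagonal σ * Vᵀ
      = U * diagonal (fun i => d i - σ i) * Vᵀ := by
    rw [← Matrix.sub_mul, ← Matrix.mul_sub, diagonal_sub]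
  rw [proxObjective, frobNorm, nuclearNorm_mul_diagonal_mul_transpose hU hV hd,
    sum_sq_mul_diagonal_mul_transpose hU hV]
  simp only [← Matrix.sub_apply, hdiff, sum_sq_mul_diagonal_mul_transpose hU hV]

theorem le_proxObjective {m n : ℕ} {κ : Type*} [Fintype κ] [DecidableEq κ]
    {U : Matrix (Fin m) κ ℝ} {V : Matrix (Fin n) κ ℝ} (hU : Uᵀ * U = 1) (hV : Vᵀ * V = 1)
    {lam : ℝ} (hlam : 0 ≤ lam) {σ w : κ → ℝ} (hσ : ∀ i, 0 ≤ σ i)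
    (hσw : ∀ i, σ i - lam ≤ w i) (Y : Matrix (Fin m) (Fin n) ℝ) :
    (1 / 2) * ∑ k, σ k ^ 2 - (1 / 2) * (lam + √(∑ k, w k ^ 2)) ^ 2
      ≤ proxObjective lam (U * diagonal σ * Vᵀ) Y := by
  set a : κ → ℝ := fun k => (Uᵀ * Y * V) k k
  have hnuc : ∑ k, |a k| ≤ nuclearNorm Y := sum_abs_diag_le_nuclearNorm hU hV Y
  have hfrob : √(∑ k, a k ^ 2) ≤ frobNorm Y := Real.sqrt_le_sqrt (sum_sq_diag_le hU hV Y)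
  have hcs := sum_mul_sub_mul_sum_abs_le hσ hσw a
  have hexpand : ∑ i, ∑ j, (Y i j - (U * diagonal σ * Vᵀ) i j) ^ 2
      = frobNorm Y ^ 2 - 2 * ∑ k, σ k * a k + ∑ k, σ k ^ 2 := by
    rw [frobNorm, Real.sq_sqrt (by positivity), ← sum_mul_mul_diagonal_mul_transpose,
      ← sum_sq_mul_diagonal_mul_transpose hU hV σ, Finset.mul_sum]
    simp only [sub_sq, Finset.sum_add_distrib, Finset.sum_sub_distrib, Finset.mul_sum, mul_assoc]
  rw [proxObjective, hexpand]
  nlinarith [mul_le_mul_of_nonneg_left hnuc hlam,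
    mul_le_mul_of_nonneg_left hfrob (Real.sqrt_nonneg (∑ k, w k ^ 2)),
    sq_nonneg (frobNorm Y - lam - √(∑ k, w k ^ 2))]

theorem nuclear_minus_frobenius_prox_closed_form_nonzero_general
    (m n : ℕ) (lam : ℝ) (hlam : 0 < lam)
    (Z : Matrix (Fin m) (Fin n) ℝ)
    (U : Matrix (Fin m) (Fin m) ℝ) (V : Matrix (Fin n) (Fin m) ℝ)
    (σ : Fin m → ℝ)
    (hU : Uᵀ * U = 1) (hV : Vᵀ * V = 1)
    (hσnn : ∀ i : Fin m, 0 ≤ σ i)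
    (hZ : Z = U * Matrix.diagonal σ * Vᵀ)
    (w : Fin m → ℝ) (hw : ∀ i : Fin m, w i = max (σ i - lam) 0) (hwne : w ≠ 0)
    (Psi : Matrix (Fin m) (Fin n) ℝ → ℝ)
    (hPsi : ∀ X : Matrix (Fin m) (Fin n) ℝ, Psi X =
      (1 / 2) * (∑ i, ∑ j, (X i j - Z i j) ^ 2)
        + lam * (nuclearNorm X - frobNorm X))
    (Xstar : Matrix (Fin m) (Fin n) ℝ)
    (hXstar : Xstar =
      U * Matrix.diagonal (fun i => (1 + lam / Real.sqrt (∑ j, (w j) ^ 2)) * w i) * Vᵀ) :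
    ∀ Y : Matrix (Fin m) (Fin n) ℝ, Psi Xstar ≤ Psi Y := by
  intro Y
  have hPsi_eq : Psi = proxObjective lam Z := funext hPsi
  subst hPsi_eq hZ hXstar
  set r := √(∑ j, w j ^ 2)
  set c := 1 + lam / r
  have hw_nonneg (i : Fin m) : 0 ≤ w i := (hw i).symm ▸ le_max_right _ _
  have hr : 0 < r := by
    refine Real.sqrt_pos.2 (Finset.sum_pos' (fun j _ => sq_nonneg _) ?_)
    obtain ⟨i, hi⟩ := Function.ne_iff.1 hwne
    exact ⟨i, Finset.mem_univ i, pow_pos ((hw_nonneg i).lt_of_ne (Ne.symm hi)) 2⟩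
  have hc0 : 0 ≤ c := by positivity
  have hc : c * r = r + lam := by rw [add_mul, one_mul, div_mul_cancel₀ lam hr.ne']
  calc proxObjective lam (U * diagonal σ * Vᵀ) (U * diagonal (fun i => c * w i) * Vᵀ)
      = (1 / 2) * ∑ i, σ i ^ 2 - (1 / 2) * (lam + r) ^ 2 := by
        rw [proxObjective_mul_diagonal_mul_transpose hU hV lam σ
          fun i => mul_nonneg hc0 (hw_nonneg i), scaled_soft_threshold_objective_eq hw hc0 hc]
    _ ≤ proxObjective lam (U * diagonal σ * Vᵀ) Y :=
        le_proxObjective hU hV hlam.le hσnn (fun i => (hw i).symm ▸ le_max_left _ _) Y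

/-- For `m ≤ n`, `λ > 0` and `Z = U Σ Vᵀ` an SVD of `Z` with
nonincreasing nonnegative singular values `σ`, letting `w_i = max(σ_i − λ, 0)` be
nonzero, the matrix `X* = U · diag((1 + λ/‖w‖₂)·w) · Vᵀ` is a global minimizer of
`Ψ(X) = (1/2)‖X − Z‖_F² + λ(‖X‖_* − ‖X‖_F)`. -/
theorem nuclear_minus_frobenius_prox_closed_form_nonzero
    (m n : ℕ) (hmn : m ≤ n) (lam : ℝ) (hlam : 0 < lam)
    (Z : Matrix (Fin m) (Fin n) ℝ)
    (U : Matrix (Fin m) (Fin m) ℝ) (V : Matrix (Fin n) (Fin m) ℝ)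
    (σ : Fin m → ℝ)
    (hU : Uᵀ * U = 1) (hV : Vᵀ * V = 1)
    (hσa : ∀ i j : Fin m, i ≤ j → σ j ≤ σ i) (hσnn : ∀ i : Fin m, 0 ≤ σ i)
    (hZ : Z = U * Matrix.diagonal σ * Vᵀ)
    (w : Fin m → ℝ) (hw : ∀ i : Fin m, w i = max (σ i - lam) 0) (hwne : w ≠ 0)
    (Psi : Matrix (Fin m) (Fin n) ℝ → ℝ)
    (hPsi : ∀ X : Matrix (Fin m) (Fin n) ℝ, Psi X =
      (1 / 2) * (∑ i, ∑ j, (X i j - Z i j) ^ 2)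
        + lam * (nuclearNorm X - frobNorm X))
    (Xstar : Matrix (Fin m) (Fin n) ℝ)
    (hXstar : Xstar =
      U * Matrix.diagonal (fun i => (1 + lam / Real.sqrt (∑ j, (w j) ^ 2)) * w i) * Vᵀ) :
    ∀ Y : Matrix (Fin m) (Fin n) ℝ, Psi Xstar ≤ Psi Y :=
  nuclear_minus_frobenius_prox_closed_form_nonzero_general m n lam hlam Z U V σ hU hV hσnn hZ w hw
    hwne Psi hPsi Xstar hXstar
end

section
/- Let m ≤ n, λ > 0, and Z ∈ ℝ^{m×n} with Z ≠ 0 and singular value decomposition Z = U Σ Vᵀ, where Σ = diag(σ₁, …, σ_m) with σ₁ ≥ ⋯ ≥ σ_m ≥ 0, and let u₁, v₁ denote the first columns of U and V. Suppose σ_i ≤ λ for every i (i.e., w with w_i = max(σ_i − λ, 0) is zero). Then X* = σ₁ u₁ v₁ᵀ is a global minimizer over X ∈ ℝ^{m×n} of Ψ(X) = (1/2)‖X − Z‖_F² + λ(‖X‖_* − ‖X‖_F). -/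
open Matrix

/-!
Write `F = ‖Y‖_F`, `N = ‖Y‖_*` and `σ₁` for the largest singular value of `Z`. Pairing with `Z`
is bounded by the operator norm against the nuclear norm, `⟪Y, Z⟫ ≤ σ₁ N`: rotating `Y` by the
eigenvectors of `Y Yᵀ` makes its rows orthogonal with norms `√eᵢ`, and Cauchy–Schwarz applies
row by row. Together with `F ≤ N` and `σ₁ ≤ λ` this gives
`Ψ(Y) - ½‖Z‖_F² ≥ ½F² - σ₁N + σ₁(N - F) = ½(F - σ₁)² - ½σ₁²`.
The rank-one matrix `X* = σ₁ u₁ v₁ᵀ` attains the bound: `‖X*‖_* = ‖X*‖_F = σ₁` and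
`⟪X*, Z⟫ = σ₁²`.
-/

namespace Matrix

theorem transpose_dotProduct_mulVec_transpose {ι κ μ : Type*} [Fintype κ] [Fintype μ]
    (A : Matrix κ ι ℝ) (B : Matrix κ μ ℝ) (C : Matrix μ ι ℝ) (i j : ι) :
    Aᵀ i ⬝ᵥ (B *ᵥ Cᵀ j) = (Aᵀ * B * C) i j := by
  simp only [dotProduct, mulVec, mul_apply, transpose_apply, Finset.mul_sum, Finset.sum_mul]
  rw [Finset.sum_comm]
  exact Finset.sum_congr rfl fun _ _ => Finset.sum_congr rfl fun _ _ => by ring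

variable {ι κ μ : Type*} [Fintype ι] [Fintype κ] [Fintype μ]

theorem sum_sum_sub_sq (X Z : Matrix ι κ ℝ) :
    ∑ i, ∑ j, (X i j - Z i j) ^ 2
      = ∑ i, ∑ j, X i j ^ 2 - 2 * ∑ i, ∑ j, X i j * Z i j + ∑ i, ∑ j, Z i j ^ 2 := by
  simp only [sub_sq, Finset.sum_add_distrib, Finset.sum_sub_distrib, Finset.mul_sum, mul_assoc]

theorem mulVec_dotProduct_mulVec_self_of_transpose_mul_self [DecidableEq ι]
    {V : Matrix κ ι ℝ} (hV : Vᵀ * V = 1) (w : ι → ℝ) : (V *ᵥ w) ⬝ᵥ (V *ᵥ w) = w ⬝ᵥ w := by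
  rw [dotProduct_mulVec, ← mulVec_transpose, mulVec_mulVec, hV, one_mulVec]

theorem diagonal_mulVec_dotProduct_self_le [DecidableEq ι] {σ : ι → ℝ} {s : ℝ}
    (hσ : ∀ i, |σ i| ≤ s) (w : ι → ℝ) :
    (diagonal σ *ᵥ w) ⬝ᵥ (diagonal σ *ᵥ w) ≤ s ^ 2 * (w ⬝ᵥ w) := by
  simp only [mulVec_diagonal, dotProduct, Finset.mul_sum]
  refine Finset.sum_le_sum fun i _ => ?_
  have : σ i ^ 2 ≤ s ^ 2 := sq_le_sq' (abs_le.mp (hσ i)).1 (abs_le.mp (hσ i)).2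
  nlinarith [mul_self_nonneg (w i)]

theorem vecMul_mul_diagonal_mul_transpose_dotProduct_self_le [DecidableEq ι] [DecidableEq μ]
    {U : Matrix μ ι ℝ} {V : Matrix κ ι ℝ} (hU : U * Uᵀ = 1) (hV : Vᵀ * V = 1) {σ : ι → ℝ}
    {s : ℝ} (hσ : ∀ i, |σ i| ≤ s) (x : μ → ℝ) :
    (x ᵥ* (U * diagonal σ * Vᵀ)) ⬝ᵥ (x ᵥ* (U * diagonal σ * Vᵀ)) ≤ s ^ 2 * (x ⬝ᵥ x) := by
  have hUt : Uᵀᵀ * Uᵀ = 1 := by rwa [transpose_transpose]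
  rw [← vecMul_vecMul, vecMul_transpose, ← vecMul_vecMul, ← mulVec_transpose, ← mulVec_transpose,
    diagonal_transpose, mulVec_dotProduct_mulVec_self_of_transpose_mul_self hV]
  calc _ ≤ s ^ 2 * ((Uᵀ *ᵥ x) ⬝ᵥ (Uᵀ *ᵥ x)) := diagonal_mulVec_dotProduct_self_le hσ _
    _ = s ^ 2 * (x ⬝ᵥ x) := by rw [mulVec_dotProduct_mulVec_self_of_transpose_mul_self hUt]

theorem sum_transpose_mul_dotProduct_transpose_mul [DecidableEq ι] {P : Matrix ι ι ℝ}
    (hP : P * Pᵀ = 1) (Y Z : Matrix ι κ ℝ) : ∑ i, (Pᵀ * Y) i ⬝ᵥ (Pᵀ * Z) i = ∑ i, Y i ⬝ᵥ Z i := by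
  have htrace : ∀ A B : Matrix ι κ ℝ, ∑ i, A i ⬝ᵥ B i = (A * Bᵀ).trace := fun A B => by
    simp [trace, mul_apply, dotProduct]
  rw [htrace, htrace, transpose_mul, transpose_transpose, Matrix.mul_assoc, trace_mul_comm,
    Matrix.mul_assoc, Matrix.mul_assoc, hP, Matrix.mul_one]

theorem exists_orthogonal_rows_dotProduct_self_eq_eigenvalues [DecidableEq ι]
    (Y : Matrix ι κ ℝ) :
    ∃ P : Matrix ι ι ℝ, P * Pᵀ = 1 ∧
      ∀ i, (Pᵀ * Y) i ⬝ᵥ (Pᵀ * Y) i = (isHermitian_mul_conjTranspose_self Y).eigenvalues i := by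
  set hH := isHermitian_mul_conjTranspose_self Y
  refine ⟨hH.eigenvectorUnitary, ?_, fun i => ?_⟩
  · simpa [star_eq_conjTranspose] using
      mem_unitaryGroup_iff.mp hH.eigenvectorUnitary.2
  · have hdiag := hH.conjStarAlgAut_star_eigenvectorUnitary
    rw [Unitary.conjStarAlgAut_star_apply] at hdiag
    have hrows : ((hH.eigenvectorUnitary : Matrix ι ι ℝ)ᵀ * Y) *
        ((hH.eigenvectorUnitary : Matrix ι ι ℝ)ᵀ * Y)ᵀ = diagonal hH.eigenvalues := by
      simpa [star_eq_conjTranspose, Matrix.mul_assoc] using hdiag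
    simpa only [mul_apply, dotProduct, transpose_apply, diagonal_apply_eq] using
      congrFun (congrFun hrows i) i

theorem sum_eigenvalues_mul_conjTranspose_self [DecidableEq ι] (Y : Matrix ι κ ℝ) :
    ∑ i, (isHermitian_mul_conjTranspose_self Y).eigenvalues i = ∑ i, ∑ j, Y i j ^ 2 := by
  have := (isHermitian_mul_conjTranspose_self Y).trace_eq_sum_eigenvalues
  simp only [RCLike.ofReal_real_eq_id, id] at this
  rw [← this]
  simp [trace, mul_apply, sq]

theorem dotProduct_le_sqrt_mul_sqrt (v w : ι → ℝ) : v ⬝ᵥ w ≤ √(v ⬝ᵥ v) * √(w ⬝ᵥ w) := by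
  simpa only [dotProduct, sq] using Real.sum_mul_le_sqrt_mul_sqrt Finset.univ v w

theorem transpose_mul_mul_diagonal_mul_transpose_mul [DecidableEq ι] {U : Matrix μ ι ℝ}
    {V : Matrix κ ι ℝ} (hU : Uᵀ * U = 1) (hV : Vᵀ * V = 1) (σ : ι → ℝ) :
    Uᵀ * (U * diagonal σ * Vᵀ) * V = diagonal σ := by
  rw [← Matrix.mul_assoc, ← Matrix.mul_assoc, hU, Matrix.one_mul, Matrix.mul_assoc, hV,
    Matrix.mul_one]

end Matrix

namespace Real

variable {ι : Type*}

theorem sqrt_sum_le_sum_sqrt {s : Finset ι} {f : ι → ℝ} (hf : ∀ i ∈ s, 0 ≤ f i) :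
    √(∑ i ∈ s, f i) ≤ ∑ i ∈ s, √(f i) := by
  rw [Real.sqrt_le_iff]
  refine ⟨Finset.sum_nonneg fun i _ => Real.sqrt_nonneg _, ?_⟩
  calc ∑ i ∈ s, f i = ∑ i ∈ s, √(f i) ^ 2 :=
        Finset.sum_congr rfl fun i hi => (Real.sq_sqrt (hf i hi)).symm
    _ ≤ (∑ i ∈ s, √(f i)) ^ 2 :=
        Finset.sum_sq_le_sq_sum_of_nonneg fun i _ => Real.sqrt_nonneg _

theorem sum_sqrt_eq_sqrt_sum_of_subsingleton [Fintype ι] {f : ι → ℝ}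
    (h : Subsingleton {i // f i ≠ 0}) : ∑ i, √(f i) = √(∑ i, f i) := by
  by_cases hzero : ∀ i, f i = 0
  · simp [hzero]
  obtain ⟨i, hi⟩ := not_forall.mp hzero
  have hrest : ∀ j, j ≠ i → f j = 0 := fun j hji => by
    by_contra hj
    exact hji (congrArg Subtype.val (Subsingleton.elim (⟨j, hj⟩ : {i // f i ≠ 0}) ⟨i, hi⟩))
  rw [Finset.sum_eq_single i (fun j _ hji => by rw [hrest j hji, Real.sqrt_zero]) (by simp),
    Finset.sum_eq_single i (fun j _ hji => hrest j hji) (by simp)]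

end Real

section NuclearNorm

variable {m n : ℕ}

theorem frobNorm_le_nuclearNorm (Y : Matrix (Fin m) (Fin n) ℝ) : frobNorm Y ≤ nuclearNorm Y := by
  rw [frobNorm, nuclearNorm, ← sum_eigenvalues_mul_conjTranspose_self]
  exact Real.sqrt_sum_le_sum_sqrt fun i _ => eigenvalues_self_mul_conjTranspose_nonneg Y i

theorem nuclearNorm_eq_frobNorm_of_rank_le_one {Y : Matrix (Fin m) (Fin n) ℝ} (hY : Y.rank ≤ 1) :
    nuclearNorm Y = frobNorm Y := by
  rw [frobNorm, nuclearNorm, ← sum_eigenvalues_mul_conjTranspose_self]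
  apply Real.sum_sqrt_eq_sqrt_sum_of_subsingleton
  rw [← Fintype.card_le_one_iff_subsingleton, ← IsHermitian.rank_eq_card_non_zero_eigs,
    rank_self_mul_conjTranspose]
  exact hY

theorem sum_mul_le_mul_nuclearNorm (Y Z : Matrix (Fin m) (Fin n) ℝ) {s : ℝ} (hs : 0 ≤ s)
    (hZ : ∀ x, (x ᵥ* Z) ⬝ᵥ (x ᵥ* Z) ≤ s ^ 2 * (x ⬝ᵥ x)) :
    ∑ i, ∑ j, Y i j * Z i j ≤ s * nuclearNorm Y := by
  obtain ⟨P, hP, hrows⟩ := exists_orthogonal_rows_dotProduct_self_eq_eigenvalues Y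
  have hPtP : Pᵀ * P = 1 := mul_eq_one_comm.mp hP
  have hcols : ∀ i, Pᵀ i ⬝ᵥ Pᵀ i = 1 := fun i => by
    simpa [mul_apply, dotProduct] using congrFun (congrFun hPtP i) i
  have hrowZ : ∀ i, √((Pᵀ * Z) i ⬝ᵥ (Pᵀ * Z) i) ≤ s := fun i => by
    rw [mul_apply_eq_vecMul, Real.sqrt_le_iff]
    exact ⟨hs, by simpa [hcols i] using hZ (Pᵀ i)⟩
  calc ∑ i, ∑ j, Y i j * Z i j = ∑ i, (Pᵀ * Y) i ⬝ᵥ (Pᵀ * Z) i :=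
        (sum_transpose_mul_dotProduct_transpose_mul hP Y Z).symm
    _ ≤ ∑ i, √((isHermitian_mul_conjTranspose_self Y).eigenvalues i) * s := by
        refine Finset.sum_le_sum fun i _ => (dotProduct_le_sqrt_mul_sqrt _ _).trans ?_
        rw [hrows i]
        exact mul_le_mul_of_nonneg_left (hrowZ i) (Real.sqrt_nonneg _)
    _ = s * nuclearNorm Y := by
        rw [nuclearNorm, Finset.mul_sum]
        simp only [mul_comm]

theorem frobNorm_sq (Y : Matrix (Fin m) (Fin n) ℝ) : frobNorm Y ^ 2 = ∑ i, ∑ j, Y i j ^ 2 :=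
  Real.sq_sqrt (by positivity)

theorem frobNorm_vecMulVec (u : Fin m → ℝ) (v : Fin n → ℝ) :
    frobNorm (vecMulVec u v) = √(u ⬝ᵥ u) * √(v ⬝ᵥ v) := by
  have hu : 0 ≤ u ⬝ᵥ u := Finset.sum_nonneg fun i _ => mul_self_nonneg (u i)
  rw [frobNorm, ← Real.sqrt_mul hu]
  congr 1
  simp only [vecMulVec_apply, dotProduct, Finset.sum_mul_sum]
  exact Finset.sum_congr rfl fun i _ => Finset.sum_congr rfl fun j _ => by ring

theorem nuclearNorm_vecMulVec (u : Fin m → ℝ) (v : Fin n → ℝ) :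
    nuclearNorm (vecMulVec u v) = √(u ⬝ᵥ u) * √(v ⬝ᵥ v) := by
  rw [nuclearNorm_eq_frobNorm_of_rank_le_one (rank_vecMulVec_le u v), frobNorm_vecMulVec]

theorem sum_vecMulVec_mul (u : Fin m → ℝ) (v : Fin n → ℝ) (Z : Matrix (Fin m) (Fin n) ℝ) :
    ∑ i, ∑ j, vecMulVec u v i j * Z i j = u ⬝ᵥ (Z *ᵥ v) := by
  simp only [vecMulVec_apply, dotProduct, mulVec, Finset.mul_sum]
  exact Finset.sum_congr rfl fun i _ => Finset.sum_congr rfl fun j _ => by ring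

end NuclearNorm

theorem nuclear_minus_frobenius_prox_closed_form_zero_general
    (m n : ℕ) (hm : 1 ≤ m) (lam : ℝ)
    (Z : Matrix (Fin m) (Fin n) ℝ)
    (U : Matrix (Fin m) (Fin m) ℝ) (V : Matrix (Fin n) (Fin m) ℝ)
    (σ : Fin m → ℝ)
    (hU : Uᵀ * U = 1) (hV : Vᵀ * V = 1)
    (hσa : ∀ i j : Fin m, i ≤ j → σ j ≤ σ i) (hσnn : ∀ i : Fin m, 0 ≤ σ i)
    (hZ : Z = U * Matrix.diagonal σ * Vᵀ)
    (hσle : ∀ i : Fin m, σ i ≤ lam)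
    (Psi : Matrix (Fin m) (Fin n) ℝ → ℝ)
    (hPsi : ∀ X : Matrix (Fin m) (Fin n) ℝ, Psi X =
      (1 / 2) * (∑ i, ∑ j, (X i j - Z i j) ^ 2)
        + lam * (nuclearNorm X - frobNorm X))
    (Xstar : Matrix (Fin m) (Fin n) ℝ)
    (hXstar : Xstar = fun i j => σ ⟨0, hm⟩ * U i ⟨0, hm⟩ * V j ⟨0, hm⟩) :
    ∀ Y : Matrix (Fin m) (Fin n) ℝ, Psi Xstar ≤ Psi Y := by
  intro Y
  set i0 : Fin m := ⟨0, hm⟩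
  have hσ0 : 0 ≤ σ i0 := hσnn i0
  have hu : Uᵀ i0 ⬝ᵥ Uᵀ i0 = 1 := by
    simpa [mul_apply, dotProduct] using congrFun (congrFun hU i0) i0
  have hv : Vᵀ i0 ⬝ᵥ Vᵀ i0 = 1 := by
    simpa [mul_apply, dotProduct] using congrFun (congrFun hV i0) i0
  have hXuv : Xstar = vecMulVec (σ i0 • Uᵀ i0) (Vᵀ i0) := by
    rw [hXstar]
    ext i j
    simp [vecMulVec_apply, mul_assoc]
  have hσuv : √((σ i0 • Uᵀ i0) ⬝ᵥ (σ i0 • Uᵀ i0)) * √(Vᵀ i0 ⬝ᵥ Vᵀ i0) = σ i0 := by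
    rw [smul_dotProduct, dotProduct_smul, hu, hv]
    simp [Real.sqrt_mul_self hσ0]
  have hfrobX : frobNorm Xstar = σ i0 := by rw [hXuv, frobNorm_vecMulVec, hσuv]
  have hnucX : nuclearNorm Xstar = σ i0 := by rw [hXuv, nuclearNorm_vecMulVec, hσuv]
  have hcorrX : ∑ i, ∑ j, Xstar i j * Z i j = σ i0 ^ 2 := by
    rw [hXuv, sum_vecMulVec_mul, smul_dotProduct, transpose_dotProduct_mulVec_transpose, hZ,
      transpose_mul_mul_diagonal_mul_transpose_mul hU hV, diagonal_apply_eq, smul_eq_mul, sq]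
  have hZop : ∀ x, (x ᵥ* Z) ⬝ᵥ (x ᵥ* Z) ≤ σ i0 ^ 2 * (x ⬝ᵥ x) := hZ ▸
    vecMul_mul_diagonal_mul_transpose_dotProduct_self_le (mul_eq_one_comm.mp hU) hV
      fun i => (abs_of_nonneg (hσnn i)).trans_le (hσa i0 i (Nat.zero_le _))
  have hcorrY := sum_mul_le_mul_nuclearNorm Y Z hσ0 hZop
  have hfrobY := frobNorm_le_nuclearNorm Y
  rw [hPsi, hPsi, sum_sum_sub_sq, sum_sum_sub_sq, ← frobNorm_sq Y, ← frobNorm_sq Xstar, hfrobX,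
    hnucX, hcorrX]
  nlinarith [sq_nonneg (frobNorm Y - σ i0), mul_nonneg (sub_nonneg.mpr (hσle i0))
    (sub_nonneg.mpr hfrobY)]

/-- For `m ≤ n`, `λ > 0` and `Z ≠ 0` with SVD `Z = U Σ Vᵀ` whose
nonincreasing nonnegative singular values all satisfy `σ_i ≤ λ`, the rank-one matrix
`X* = σ₁ u₁ v₁ᵀ` (with `u₁, v₁` the first columns of `U`, `V`) is a global minimizer
of `Ψ(X) = (1/2)‖X − Z‖_F² + λ(‖X‖_* − ‖X‖_F)`. -/
theorem nuclear_minus_frobenius_prox_closed_form_zero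
    (m n : ℕ) (hm : 1 ≤ m) (hmn : m ≤ n) (lam : ℝ) (hlam : 0 < lam)
    (Z : Matrix (Fin m) (Fin n) ℝ) (hZne : Z ≠ 0)
    (U : Matrix (Fin m) (Fin m) ℝ) (V : Matrix (Fin n) (Fin m) ℝ)
    (σ : Fin m → ℝ)
    (hU : Uᵀ * U = 1) (hV : Vᵀ * V = 1)
    (hσa : ∀ i j : Fin m, i ≤ j → σ j ≤ σ i) (hσnn : ∀ i : Fin m, 0 ≤ σ i)
    (hZ : Z = U * Matrix.diagonal σ * Vᵀ)
    (hσle : ∀ i : Fin m, σ i ≤ lam)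
    (Psi : Matrix (Fin m) (Fin n) ℝ → ℝ)
    (hPsi : ∀ X : Matrix (Fin m) (Fin n) ℝ, Psi X =
      (1 / 2) * (∑ i, ∑ j, (X i j - Z i j) ^ 2)
        + lam * (nuclearNorm X - frobNorm X))
    (Xstar : Matrix (Fin m) (Fin n) ℝ)
    (hXstar : Xstar = fun i j => σ ⟨0, hm⟩ * U i ⟨0, hm⟩ * V j ⟨0, hm⟩) :
    ∀ Y : Matrix (Fin m) (Fin n) ℝ, Psi Xstar ≤ Psi Y :=
  nuclear_minus_frobenius_prox_closed_form_zero_general m n hm lam Z U V σ hU hV hσa hσnn hZ hσle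
    Psi hPsi Xstar hXstar
end
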